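/- arXiv:2202.08881 — 4 statements merged into one kernel-verified Lean document; each statement's English description precedes it below -/
import Mathlib

section
/- Let 𝔤 be a Lie algebra over ℝ, let Ω : 𝔤 × 𝔤 → 𝔤 be an alternating ℝ-bilinear map, and let 𝔪 and 𝔨 be Lie subalgebras of 𝔤. Define ∂Ω(x,y,z) := [x, Ω(y,z)] − [y, Ω(x,z)] + [z, Ω(x,y)] − Ω([x,y], z) + Ω([x,z], y) − Ω([y,z], x). Assume: (i) Ω(z, x) = 0 for every z ∈ 𝔨 and every x ∈ 𝔤; (ii) [z, Ω(x,y)] = Ω([z,x], y) + Ω(x, [z,y]) for every z ∈ 𝔨 and all x, y ∈ 𝔤; (iii) ∂Ω(x,y,z) = 0 for all x, y, z ∈ 𝔪; (iv) Ω(Ω(x,y), z) − Ω(Ω(x,z), y) + Ω(Ω(y,z), x) = 0 for all x, y, z in the submodule 𝔧 := 𝔪 + 𝔨; (v) [x,y] ∈ 𝔧 and Ω(x,y) ∈ 𝔧 for all x, y ∈ 𝔧. Then 𝔧 equipped with the bracket [x,y]_Ω := [x,y] − Ω(x,y) is a Lie algebra. -/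
/-!
The Jacobiator of the deformed bracket `[x,y] - Ω(x,y)` splits as the Jacobiator of `𝔤`, plus
the coboundary `∂Ω(x,y,z)`, plus the Kruglikov–The expression in `Ω ∘ Ω`. The first vanishes in
any Lie algebra and the last by assumption on `𝔧`. The coboundary is trilinear and alternating,
vanishes on `𝔪`, and vanishes as soon as one argument lies in `𝔨`, because `𝔨` annihilates `Ω`
and acts on it by derivations; hence it vanishes on `𝔧 = 𝔪 + 𝔨`.
-/

structure IsLieBracket (L : Type*) [AddCommGroup L] [Module ℝ L] (b : L → L → L) : Prop where
  add_left : ∀ x y z : L, b (x + y) z = b x z + b y z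
  smul_left : ∀ (c : ℝ) (x z : L), b (c • x) z = c • b x z
  add_right : ∀ x y z : L, b x (y + z) = b x y + b x z
  smul_right : ∀ (c : ℝ) (x z : L), b x (c • z) = c • b x z
  alternating : ∀ x : L, b x x = 0
  jacobi : ∀ x y z : L, b (b x y) z + b (b y z) x + b (b z x) y = 0

open LieAlgebra

section Coboundary

variable {R L : Type*} [CommRing R] [LieRing L] [LieAlgebra R L] (Ω : L →ₗ[R] L →ₗ[R] L)

/-- The Chevalley–Eilenberg differential of `Ω`, viewed as a 2-cochain with values in the
adjoint representation. -/
def lieCoboundary (x y z : L) : L :=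
  ⁅x, Ω y z⁆ - ⁅y, Ω x z⁆ + ⁅z, Ω x y⁆ - Ω ⁅x, y⁆ z + Ω ⁅x, z⁆ y - Ω ⁅y, z⁆ x

variable {Ω}

theorem lieCoboundary_add_left (a b y z : L) :
    lieCoboundary Ω (a + b) y z = lieCoboundary Ω a y z + lieCoboundary Ω b y z := by
  simp only [lieCoboundary, map_add, LinearMap.add_apply, add_lie, lie_add]
  abel

theorem lieCoboundary_add_middle (x a b z : L) :
    lieCoboundary Ω x (a + b) z = lieCoboundary Ω x a z + lieCoboundary Ω x b z := by
  simp only [lieCoboundary, map_add, LinearMap.add_apply, add_lie, lie_add]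
  abel

theorem lieCoboundary_add_right (x y a b : L) :
    lieCoboundary Ω x y (a + b) = lieCoboundary Ω x y a + lieCoboundary Ω x y b := by
  simp only [lieCoboundary, map_add, LinearMap.add_apply, add_lie, lie_add]
  abel

theorem lieCoboundary_swap_left (hΩ : Ω.IsAlt) (x y z : L) :
    lieCoboundary Ω y x z = -lieCoboundary Ω x y z := by
  simp only [lieCoboundary]
  rw [← hΩ.neg x y, ← lie_skew x y]
  simp only [map_neg, LinearMap.neg_apply, lie_neg]
  abel

theorem lieCoboundary_swap_right (hΩ : Ω.IsAlt) (x y z : L) :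
    lieCoboundary Ω x z y = -lieCoboundary Ω x y z := by
  simp only [lieCoboundary]
  rw [← hΩ.neg y z, ← lie_skew y z]
  simp only [map_neg, LinearMap.neg_apply, lie_neg]
  abel

theorem lieCoboundary_eq_zero_of_derivation (hΩ : Ω.IsAlt) {k : L} (hk : ∀ w, Ω k w = 0)
    (hder : ∀ x y, ⁅k, Ω x y⁆ = Ω ⁅k, x⁆ y + Ω x ⁅k, y⁆) (x y : L) :
    lieCoboundary Ω k x y = 0 := by
  have hk' : ∀ w, Ω w k = 0 := fun w => by rw [← hΩ.neg, hk, neg_zero]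
  simp only [lieCoboundary, hk, hk', hder, lie_zero, sub_zero]
  rw [← hΩ.neg ⁅k, y⁆ x]
  abel

theorem lieCoboundary_eq_zero_of_mem_sup (hΩ : Ω.IsAlt) {M K : Submodule R L}
    (hM : ∀ x ∈ M, ∀ y ∈ M, ∀ z ∈ M, lieCoboundary Ω x y z = 0)
    (hK : ∀ k ∈ K, ∀ x y, lieCoboundary Ω k x y = 0)
    {x y z : L} (hx : x ∈ M ⊔ K) (hy : y ∈ M ⊔ K) (hz : z ∈ M ⊔ K) :
    lieCoboundary Ω x y z = 0 := by
  have hK₂ : ∀ k ∈ K, ∀ x y, lieCoboundary Ω x k y = 0 := fun k hk x y => by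
    rw [lieCoboundary_swap_left hΩ, hK k hk, neg_zero]
  have hK₃ : ∀ k ∈ K, ∀ x y, lieCoboundary Ω x y k = 0 := fun k hk x y => by
    rw [lieCoboundary_swap_right hΩ, hK₂ k hk, neg_zero]
  obtain ⟨mx, hmx, kx, hkx, rfl⟩ := Submodule.mem_sup.mp hx
  obtain ⟨my, hmy, ky, hky, rfl⟩ := Submodule.mem_sup.mp hy
  obtain ⟨mz, hmz, kz, hkz, rfl⟩ := Submodule.mem_sup.mp hz
  simp only [lieCoboundary_add_left, lieCoboundary_add_middle, lieCoboundary_add_right,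
    hM mx hmx my hmy mz hmz, hK kx hkx, hK₂ ky hky, hK₃ kz hkz, add_zero]

theorem jacobi_ad_sub_eq_lieCoboundary_add (hΩ : Ω.IsAlt) (x y z : L) :
    (ad R L - Ω) ((ad R L - Ω) x y) z + (ad R L - Ω) ((ad R L - Ω) y z) x
      + (ad R L - Ω) ((ad R L - Ω) z x) y
      = lieCoboundary Ω x y z + (Ω (Ω x y) z - Ω (Ω x z) y + Ω (Ω y z) x) := by
  have jac := lie_jacobi x y z
  rw [← lie_skew x ⁅y, z⁆, ← lie_skew y ⁅z, x⁆, ← lie_skew z ⁅x, y⁆] at jac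
  simp only [lieCoboundary, LinearMap.sub_apply, LieHom.coe_toLinearMap, ad_apply, map_sub]
  rw [← lie_skew (Ω x y) z, ← lie_skew (Ω y z) x, ← lie_skew (Ω z x) y, ← hΩ.neg x z,
    ← lie_skew x z]
  simp only [map_neg, LinearMap.neg_apply, lie_neg]
  linear_combination (norm := module) -jac

end Coboundary

theorem isLieBracket_restrict {M : Type*} [AddCommGroup M] [Module ℝ M]
    (B : M →ₗ[ℝ] M →ₗ[ℝ] M) (J : Submodule ℝ M) (hJ : ∀ x ∈ J, ∀ y ∈ J, B x y ∈ J)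
    (halt : ∀ x ∈ J, B x x = 0)
    (hjacobi : ∀ x ∈ J, ∀ y ∈ J, ∀ z ∈ J, B (B x y) z + B (B y z) x + B (B z x) y = 0) :
    IsLieBracket J (fun x y => ⟨B x y, hJ x x.2 y y.2⟩) where
  add_left x y z := Subtype.ext (by simp)
  smul_left c x z := Subtype.ext (by simp)
  add_right x y z := Subtype.ext (by simp)
  smul_right c x z := Subtype.ext (by simp)
  alternating x := Subtype.ext (halt x x.2)
  jacobi x y z := Subtype.ext (hjacobi x x.2 y y.2 z z.2)

/-- Abstraction of the Theorem of Section 3: if `𝔪` and `𝔨` are Lie subalgebras of `𝔤`,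
`Ω` is an alternating bilinear map annihilated and infinitesimally stabilized by `𝔨`,
satisfying `∂Ω = 0` on `𝔪` and the Kruglikov–The property on `𝔧 := 𝔪 + 𝔨`, and `𝔧`
is closed under both the bracket and `Ω`, then `𝔧` with the deformed bracket
`[x,y]_Ω = [x,y] - Ω(x,y)` is a Lie algebra. -/
theorem sum_subalgebras_deformed_bracket_isLieBracket
    (𝔤 : Type*) [LieRing 𝔤] [LieAlgebra ℝ 𝔤]
    (Ω : 𝔤 →ₗ[ℝ] 𝔤 →ₗ[ℝ] 𝔤)
    (halt : ∀ x : 𝔤, Ω x x = 0)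
    (𝔪 𝔨 : LieSubalgebra ℝ 𝔤)
    (h1 : ∀ z ∈ 𝔨, ∀ x : 𝔤, Ω z x = 0)
    (h2 : ∀ z ∈ 𝔨, ∀ x y : 𝔤, ⁅z, Ω x y⁆ = Ω ⁅z, x⁆ y + Ω x ⁅z, y⁆)
    (h3 : ∀ x ∈ 𝔪, ∀ y ∈ 𝔪, ∀ z ∈ 𝔪,
      ⁅x, Ω y z⁆ - ⁅y, Ω x z⁆ + ⁅z, Ω x y⁆
        - Ω ⁅x, y⁆ z + Ω ⁅x, z⁆ y - Ω ⁅y, z⁆ x = 0)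
    (h4 : ∀ x ∈ (𝔪.toSubmodule ⊔ 𝔨.toSubmodule : Submodule ℝ 𝔤),
          ∀ y ∈ (𝔪.toSubmodule ⊔ 𝔨.toSubmodule : Submodule ℝ 𝔤),
          ∀ z ∈ (𝔪.toSubmodule ⊔ 𝔨.toSubmodule : Submodule ℝ 𝔤),
      Ω (Ω x y) z - Ω (Ω x z) y + Ω (Ω y z) x = 0)
    (h5br : ∀ x ∈ (𝔪.toSubmodule ⊔ 𝔨.toSubmodule : Submodule ℝ 𝔤),
            ∀ y ∈ (𝔪.toSubmodule ⊔ 𝔨.toSubmodule : Submodule ℝ 𝔤),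
      ⁅x, y⁆ ∈ (𝔪.toSubmodule ⊔ 𝔨.toSubmodule : Submodule ℝ 𝔤))
    (h5Om : ∀ x ∈ (𝔪.toSubmodule ⊔ 𝔨.toSubmodule : Submodule ℝ 𝔤),
            ∀ y ∈ (𝔪.toSubmodule ⊔ 𝔨.toSubmodule : Submodule ℝ 𝔤),
      Ω x y ∈ (𝔪.toSubmodule ⊔ 𝔨.toSubmodule : Submodule ℝ 𝔤)) :
    IsLieBracket ↥(𝔪.toSubmodule ⊔ 𝔨.toSubmodule : Submodule ℝ 𝔤)
      (fun x y =>
        (⟨⁅(x : 𝔤), (y : 𝔤)⁆ - Ω (x : 𝔤) (y : 𝔤),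
          Submodule.sub_mem _ (h5br x x.2 y y.2) (h5Om x x.2 y y.2)⟩ :
            ↥(𝔪.toSubmodule ⊔ 𝔨.toSubmodule : Submodule ℝ 𝔤))) := by
  refine isLieBracket_restrict (ad ℝ 𝔤 - Ω : 𝔤 →ₗ[ℝ] 𝔤 →ₗ[ℝ] 𝔤) _
    (fun x hx y hy => Submodule.sub_mem _ (h5br x hx y hy) (h5Om x hx y hy))
    (fun x _ => by simp [halt]) (fun x hx y hy z hz => ?_)
  have hcob : lieCoboundary Ω x y z = 0 :=
    lieCoboundary_eq_zero_of_mem_sup halt h3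
      (fun k hk => lieCoboundary_eq_zero_of_derivation halt (h1 k hk) (h2 k hk)) hx hy hz
  rw [jacobi_ad_sub_eq_lieCoboundary_add halt, hcob, h4 x hx y hy z hz, add_zero]
end

section
/- Let L be a nilpotent Lie algebra over ℝ and Ω : L × L → L an alternating ℝ-bilinear map such that the deformed bracket [x,y]_Ω := [x,y] − Ω(x,y) makes the underlying module of L into a Lie algebra L_Ω. Let D¹ ⊆ L denote the ℝ-span of { [x,y] − Ω(x,y) : x, y ∈ L } (the derived ideal of L_Ω). If Ω(u, v) = 0 for all u, v ∈ D¹, then the deformed Lie algebra L_Ω is solvable. -/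
/-- The derived series of the deformed Lie algebra `L_Ω`, whose bracket is
`[x,y]_Ω = [x,y] - Ω(x,y)`. -/
def deformedDerivedSeries (L : Type*) [LieRing L] [LieAlgebra ℝ L]
    (Ω : L →ₗ[ℝ] L →ₗ[ℝ] L) : ℕ → Submodule ℝ L
  | 0 => ⊤
  | n + 1 => Submodule.span ℝ
      {z : L | ∃ x ∈ deformedDerivedSeries L Ω n, ∃ y ∈ deformedDerivedSeries L Ω n,
        z = ⁅x, y⁆ - Ω x y}

/-!
Every term `Dⁿ⁺¹` of the deformed derived series lies in `D¹`, and `Ω` vanishes on pairs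
from `D¹`, so the generators `[x,y] - Ω(x,y)` of `Dⁿ⁺²` are ordinary brackets `[x,y]`.
By induction `Dⁿ⁺¹` lies in the `n`-th term of the lower central series of `L`, which
vanishes for large `n` by nilpotency.
-/

namespace deformedDerivedSeries

variable {L : Type*} [LieRing L] [LieAlgebra ℝ L] (Ω : L →ₗ[ℝ] L →ₗ[ℝ] L)

theorem succ_le (n : ℕ) : deformedDerivedSeries L Ω (n + 1) ≤ deformedDerivedSeries L Ω n := by
  induction n with
  | zero => exact le_top
  | succ n ih =>
    refine Submodule.span_mono ?_
    rintro z ⟨x, hx, y, hy, rfl⟩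
    exact ⟨x, ih hx, y, ih hy, rfl⟩

theorem antitone : Antitone (deformedDerivedSeries L Ω) :=
  antitone_nat_of_succ_le (succ_le Ω)

theorem one_eq :
    deformedDerivedSeries L Ω 1 = Submodule.span ℝ {z : L | ∃ x y : L, z = ⁅x, y⁆ - Ω x y} := by
  simp [deformedDerivedSeries]

theorem succ_le_lowerCentralSeries
    (hΩ : ∀ u ∈ deformedDerivedSeries L Ω 1, ∀ v ∈ deformedDerivedSeries L Ω 1, Ω u v = 0)
    (n : ℕ) :
    deformedDerivedSeries L Ω (n + 1) ≤ (LieModule.lowerCentralSeries ℝ L L n).toSubmodule := by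
  induction n with
  | zero => exact le_top
  | succ n ih =>
    refine Submodule.span_le.mpr ?_
    rintro z ⟨x, hx, y, hy, rfl⟩
    have hD1 : deformedDerivedSeries L Ω (n + 1) ≤ deformedDerivedSeries L Ω 1 :=
      antitone Ω (Nat.le_add_left 1 n)
    have hxy : ⁅x, y⁆ ∈ LieModule.lowerCentralSeries ℝ L L (n + 1) := by
      rw [LieModule.lowerCentralSeries_succ]
      exact LieSubmodule.lie_mem_lie (LieSubmodule.mem_top x) (ih hy)
    simpa [hΩ x (hD1 hx) y (hD1 hy)] using hxy

end deformedDerivedSeries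

theorem deformed_algebra_solvable_general
    (L : Type*) [LieRing L] [LieAlgebra ℝ L] [LieRing.IsNilpotent L]
    (Ω : L →ₗ[ℝ] L →ₗ[ℝ] L)
    (hOmD1 : ∀ u ∈ Submodule.span ℝ {z : L | ∃ x y : L, z = ⁅x, y⁆ - Ω x y},
             ∀ v ∈ Submodule.span ℝ {z : L | ∃ x y : L, z = ⁅x, y⁆ - Ω x y},
      Ω u v = 0) :
    ∃ n : ℕ, deformedDerivedSeries L Ω n = ⊥ := by
  obtain ⟨k, hk⟩ := LieModule.IsNilpotent.nilpotent (R := ℝ) (L := L) (M := L)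
  refine ⟨k + 1, le_bot_iff.mp ?_⟩
  have hΩ := deformedDerivedSeries.one_eq Ω ▸ hOmD1
  simpa [hk] using deformedDerivedSeries.succ_le_lowerCentralSeries Ω hΩ k

/-- Abstraction of the solvability argument in the proof of Theorem 3.4: if `L` is a
nilpotent real Lie algebra, the deformed bracket `[x,y]_Ω = [x,y] - Ω(x,y)` makes the
underlying module into a Lie algebra `L_Ω`, and `Ω` vanishes on pairs from the derived
ideal `D¹ = span { [x,y] - Ω(x,y) }` of `L_Ω`, then `L_Ω` is solvable. -/
theorem deformed_algebra_solvable
    (L : Type*) [LieRing L] [LieAlgebra ℝ L] [LieRing.IsNilpotent L]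
    (Ω : L →ₗ[ℝ] L →ₗ[ℝ] L)
    (halt : ∀ x : L, Ω x x = 0)
    (hLie : IsLieBracket L (fun x y => ⁅x, y⁆ - Ω x y))
    (hOmD1 : ∀ u ∈ Submodule.span ℝ {z : L | ∃ x y : L, z = ⁅x, y⁆ - Ω x y},
             ∀ v ∈ Submodule.span ℝ {z : L | ∃ x y : L, z = ⁅x, y⁆ - Ω x y},
      Ω u v = 0) :
    ∃ n : ℕ, deformedDerivedSeries L Ω n = ⊥ :=
  deformed_algebra_solvable_general L Ω hOmD1
end

section
/- Let V be a finite-dimensional real inner product space, let E, ξ ∈ V with ξ ≠ 0 and ⟨ξ, E⟩ > 0, and let S be a finite set of vectors of V. Set S₁ := { ν ∈ S : ⟨ν, E⟩ = 1 } and assume every element of S can be written as a sum ν₁ + ⋯ + ν_k with k ≥ 1 and each νᵢ ∈ S₁. Let c := E − (⟨ξ, E⟩ / ⟨ξ, ξ⟩) ξ (the orthogonal projection of E onto the hyperplane orthogonal to ξ). Then ⟨ν, c⟩ > 0 for every ν ∈ S if and only if ⟨ξ, ν⟩ < ⟨ξ, ξ⟩ / ⟨ξ, E⟩ for every ν ∈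 S₁. -/
/-!
For `ν ∈ S₁` the condition `0 < ⟪ν, c⟫` unfolds, using `⟪ν, E⟫ = 1` and the positivity of
`⟪ξ, ξ⟫` and `⟪ξ, E⟫`, to `⟪ξ, ν⟫ < ⟪ξ, ξ⟫ / ⟪ξ, E⟫`; this gives one direction at once. For the
other, every `ν ∈ S` is a nonempty sum of elements of `S₁`, and `⟪·, c⟫` is additive, so
positivity on `S₁` propagates to `S`.
-/

open RealInnerProductSpace

section

variable {V : Type*} [NormedAddCommGroup V] [InnerProductSpace ℝ V]

theorem real_inner_list_sum_pos {l : List V} {c : V} (hl : l ≠ [])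
    (hpos : ∀ v ∈ l, 0 < ⟪v, c⟫) : 0 < ⟪l.sum, c⟫ := by
  rw [real_inner_comm, ← innerSL_apply_apply ℝ, map_list_sum]
  exact List.sum_pos _ (by simpa [real_inner_comm] using hpos) (by simpa using hl)

theorem real_inner_sub_smul_right (ν E ξ : V) (a : ℝ) :
    ⟪ν, E - a • ξ⟫ = ⟪ν, E⟫ - a * ⟪ξ, ν⟫ := by
  rw [inner_sub_right, real_inner_smul_right, real_inner_comm ν ξ]

theorem inner_projection_pos_iff_of_inner_eq_one {ν E ξ : V} (hξ : ξ ≠ 0) (hξE : 0 < ⟪ξ, E⟫)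
    (hν : ⟪ν, E⟫ = 1) :
    0 < ⟪ν, E - (⟪ξ, E⟫ / ⟪ξ, ξ⟫) • ξ⟫ ↔ ⟪ξ, ν⟫ < ⟪ξ, ξ⟫ / ⟪ξ, E⟫ := by
  have hξξ : 0 < ⟪ξ, ξ⟫ := real_inner_self_pos.mpr hξ
  rw [real_inner_sub_smul_right, hν, sub_pos, div_mul_eq_mul_div, div_lt_one hξξ,
    lt_div_iff₀' hξE]

end

theorem projection_positive_iff_general
    (V : Type*) [NormedAddCommGroup V] [InnerProductSpace ℝ V]
    (E ξ : V) (hξ : ξ ≠ 0) (hξE : 0 < ⟪ξ, E⟫)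
    (S : Set V)
    (hgen : ∀ ν ∈ S, ∃ l : List V, l ≠ [] ∧
      (∀ v ∈ l, v ∈ {ν' ∈ S | ⟪ν', E⟫ = (1 : ℝ)}) ∧ l.sum = ν) :
    (∀ ν ∈ S, 0 < ⟪ν, E - (⟪ξ, E⟫ / ⟪ξ, ξ⟫) • ξ⟫) ↔
      (∀ ν ∈ {ν' ∈ S | ⟪ν', E⟫ = (1 : ℝ)}, ⟪ξ, ν⟫ < ⟪ξ, ξ⟫ / ⟪ξ, E⟫) := by
  have key : ∀ ν ∈ {ν' ∈ S | ⟪ν', E⟫ = (1 : ℝ)},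
      0 < ⟪ν, E - (⟪ξ, E⟫ / ⟪ξ, ξ⟫) • ξ⟫ ↔ ⟪ξ, ν⟫ < ⟪ξ, ξ⟫ / ⟪ξ, E⟫ :=
    fun ν hν => inner_projection_pos_iff_of_inner_eq_one hξ hξE hν.2
  refine ⟨fun h ν hν => (key ν hν).mp (h ν hν.1), fun h ν hν => ?_⟩
  obtain ⟨l, hl, hmem, rfl⟩ := hgen ν hν
  exact real_inner_list_sum_pos hl fun v hv => (key v (hmem v hv)).mpr (h v (hmem v hv))

/-- Proposition 4.5: with `c` the orthogonal projection of `E` onto the hyperplane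
orthogonal to `ξ`, and assuming every element of `S` is a (nonempty) sum of elements
of `S₁ = {ν ∈ S : ⟪ν, E⟫ = 1}`, one has `⟪ν, c⟫ > 0` for every `ν ∈ S` if and only if
`⟪ξ, ν⟫ < ⟪ξ, ξ⟫ / ⟪ξ, E⟫` for every `ν ∈ S₁`. -/
theorem projection_positive_iff
    (V : Type*) [NormedAddCommGroup V] [InnerProductSpace ℝ V]
    [FiniteDimensional ℝ V]
    (E ξ : V) (hξ : ξ ≠ 0) (hξE : 0 < ⟪ξ, E⟫)
    (S : Set V) (hSfin : S.Finite)
    (hgen : ∀ ν ∈ S, ∃ l : List V, l ≠ [] ∧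
      (∀ v ∈ l, v ∈ {ν' ∈ S | ⟪ν', E⟫ = (1 : ℝ)}) ∧ l.sum = ν) :
    (∀ ν ∈ S, 0 < ⟪ν, E - (⟪ξ, E⟫ / ⟪ξ, ξ⟫) • ξ⟫) ↔
      (∀ ν ∈ {ν' ∈ S | ⟪ν', E⟫ = (1 : ℝ)}, ⟪ξ, ν⟫ < ⟪ξ, ξ⟫ / ⟪ξ, E⟫) :=
  projection_positive_iff_general V E ξ hξ hξE S hgen
end

section
/- Let V be a real inner product space and let Φ ⊆ V ∖ {0} be a finite set such that: (i) for every α ∈ Φ, the reflection s_α(x) := x − 2(⟨x, α⟩/⟨α, α⟩)α maps Φ into Φ, and (ii) 2⟨β, α⟩/⟨α, α⟩ ∈ ℤ for all α, β ∈ Φ. If the linear span of Φ has dimension at least 3, then for every α ∈ Φ there exists β ∈ Φ with ⟨α, β⟩ = 0. -/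
/-!
Suppose no root is orthogonal to `α`. In a rank-two subsystem through `α` and a root `β`
the Cartan integers `m, n` satisfy `0 < m n < 4`; if `m n = 2` then `s_β α`, and if `m n = 3`
then `s_{s_α β} β`, is orthogonal to `α`. Hence every root off the line `ℝ α` has the length
of `α` and makes an angle of `60°` or `120°` with it. Now take roots `β, γ` with `α, β, γ`
linearly independent, both at `60°` to `α`. Looking at `α` against `s_γ β` forces `β ⊥ γ`;
but `α - γ = s_γ α` is again at `60°` to `α`, so also `β ⊥ α - γ`, whence `β ⊥ α`.
-/

open RealInnerProductSpace

theorem real_inner_mul_inner_self_lt {F : Type*} [NormedAddCommGroup F] [InnerProductSpace ℝ F]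
    {x y : F} (hx : x ≠ 0) (hy : y ∉ ℝ ∙ x) : ⟪x, y⟫ * ⟪x, y⟫ < ⟪x, x⟫ * ⟪y, y⟫ := by
  have hlt : |⟪x, y⟫| < ‖x‖ * ‖y‖ := (abs_real_inner_le_norm x y).lt_of_ne fun h =>
    hy (Or.resolve_left (((norm_inner_eq_norm_tfae ℝ x y).out 0 3).1 h) hx)
  rw [real_inner_self_eq_norm_mul_norm, real_inner_self_eq_norm_mul_norm, ← abs_mul_abs_self]
  nlinarith [abs_nonneg ⟪x, y⟫]

theorem exists_mem_notMem_span_of_card_lt_finrank {K V : Type*} [DivisionRing K]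
    [AddCommGroup V] [Module K V] {Φ : Set V} (s : Finset V)
    (hs : s.card < Module.finrank K (Submodule.span K Φ)) :
    ∃ γ ∈ Φ, γ ∉ Submodule.span K (s : Set V) := by
  by_contra! h
  have hle := Submodule.finrank_mono (Submodule.span_le.mpr h)
  have hcard : Module.finrank K (Submodule.span K (s : Set V)) ≤ s.card :=
    finrank_span_finset_le_card s
  omega

theorem int_mul_pos_and_lt_four {F : Type*} [NormedAddCommGroup F] [InnerProductSpace ℝ F]
    {x y : F} {m n : ℤ} (hx : x ≠ 0) (hy : y ∉ ℝ ∙ x) (hxy : ⟪x, y⟫ ≠ 0)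
    (hm : 2 * ⟪y, x⟫ = m * ⟪x, x⟫) (hn : 2 * ⟪x, y⟫ = n * ⟪y, y⟫) : 0 < m * n ∧ m * n < 4 := by
  have hy0 : y ≠ 0 := fun h => hy (h ▸ Submodule.zero_mem _)
  have hxx : 0 < ⟪x, x⟫ := real_inner_self_pos.mpr hx
  have hyy : 0 < ⟪y, y⟫ := real_inner_self_pos.mpr hy0
  have hprod : ((m * n : ℤ) : ℝ) * (⟪x, x⟫ * ⟪y, y⟫) = 4 * (⟪x, y⟫ * ⟪x, y⟫) := by
    rw [real_inner_comm x y] at hm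
    push_cast
    linear_combination (-(2 * ⟪x, y⟫)) * hm - m * ⟪x, x⟫ * hn
  have hcs := real_inner_mul_inner_self_lt hx hy
  have hsq : 0 < ⟪x, y⟫ * ⟪x, y⟫ := mul_self_pos.mpr hxy
  have hpos : (0 : ℝ) < ((m * n : ℤ) : ℝ) := by nlinarith [mul_pos hxx hyy]
  have hlt : ((m * n : ℤ) : ℝ) < 4 := by nlinarith [mul_pos hxx hyy]
  exact ⟨by exact_mod_cast hpos, by exact_mod_cast hlt⟩

section

variable {V : Type*} [NormedAddCommGroup V] [InnerProductSpace ℝ V]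

structure IsCrystallographicRootSet (Φ : Set V) : Prop where
  zero_notMem : (0 : V) ∉ Φ
  sub_smul_mem : ∀ α ∈ Φ, ∀ β ∈ Φ, β - (2 * ⟪β, α⟫ / ⟪α, α⟫) • α ∈ Φ
  exists_int : ∀ α ∈ Φ, ∀ β ∈ Φ, ∃ n : ℤ, 2 * ⟪β, α⟫ / ⟪α, α⟫ = n

namespace IsCrystallographicRootSet

variable {Φ : Set V} {α β γ : V} {m n : ℤ}

theorem ne_zero (hΦ : IsCrystallographicRootSet Φ) (hα : α ∈ Φ) : α ≠ 0 :=
  ne_of_mem_of_not_mem hα hΦ.zero_notMem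

theorem inner_self_pos (hΦ : IsCrystallographicRootSet Φ) (hα : α ∈ Φ) : 0 < ⟪α, α⟫ :=
  real_inner_self_pos.mpr (hΦ.ne_zero hα)

theorem exists_two_inner_eq (hΦ : IsCrystallographicRootSet Φ) (hα : α ∈ Φ) (hβ : β ∈ Φ) :
    ∃ n : ℤ, 2 * ⟪β, α⟫ = n * ⟪α, α⟫ := by
  obtain ⟨n, hn⟩ := hΦ.exists_int α hα β hβ
  exact ⟨n, by rw [← hn, div_mul_cancel₀ _ (hΦ.inner_self_pos hα).ne']⟩

theorem sub_int_smul_mem (hΦ : IsCrystallographicRootSet Φ) (hα : α ∈ Φ) (hβ : β ∈ Φ) {n : ℤ}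
    (hn : 2 * ⟪β, α⟫ = n * ⟪α, α⟫) : β - (n : ℝ) • α ∈ Φ := by
  have := hΦ.sub_smul_mem α hα β hβ
  rwa [hn, mul_div_cancel_right₀ _ (hΦ.inner_self_pos hα).ne'] at this

theorem neg_mem (hΦ : IsCrystallographicRootSet Φ) (hα : α ∈ Φ) : -α ∈ Φ := by
  have := hΦ.sub_int_smul_mem hα hα (n := 2) (by push_cast; ring)
  rwa [show α - ((2 : ℤ) : ℝ) • α = -α by push_cast; module] at this

theorem exists_inner_eq_zero_of_mul_eq_two (hΦ : IsCrystallographicRootSet Φ) (hα : α ∈ Φ)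
    (hβ : β ∈ Φ) (hm : 2 * ⟪β, α⟫ = m * ⟪α, α⟫) (hn : 2 * ⟪α, β⟫ = n * ⟪β, β⟫) (hmn : m * n = 2) :
    ∃ γ ∈ Φ, ⟪α, γ⟫ = 0 := by
  refine ⟨α - (n : ℝ) • β, hΦ.sub_int_smul_mem hβ hα hn, ?_⟩
  have hmn' : (m : ℝ) * n = 2 := by exact_mod_cast hmn
  rw [inner_sub_right, real_inner_smul_right]
  rw [real_inner_comm α β] at hm
  linear_combination (-(n : ℝ) / 2) * hm - ⟪α, α⟫ / 2 * hmn'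

theorem exists_inner_eq_zero_of_mul_eq_three (hΦ : IsCrystallographicRootSet Φ) (hα : α ∈ Φ)
    (hβ : β ∈ Φ) (hm : 2 * ⟪β, α⟫ = m * ⟪α, α⟫) (hn : 2 * ⟪α, β⟫ = n * ⟪β, β⟫) (hmn : m * n = 3) :
    ∃ γ ∈ Φ, ⟪α, γ⟫ = 0 := by
  set β' := β - (m : ℝ) • α with hβ'
  have hβ'Φ : β' ∈ Φ := hΦ.sub_int_smul_mem hα hβ hm
  have hmn' : (m : ℝ) * n = 3 := by exact_mod_cast hmn
  rw [real_inner_comm α β] at hm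
  have hβ'β' : ⟪β', β'⟫ = ⟪β, β⟫ := by
    simp only [hβ', inner_sub_left, inner_sub_right, real_inner_smul_left,
      real_inner_smul_right, real_inner_comm α β]
    linear_combination (-(m : ℝ)) * hm
  have hββ' : 2 * ⟪β, β'⟫ = ((-1 : ℤ) : ℝ) * ⟪β', β'⟫ := by
    rw [hβ'β']
    simp only [hβ', inner_sub_right, real_inner_smul_right, real_inner_comm α β]
    push_cast
    linear_combination (-⟪β, β⟫) * hmn' - (m : ℝ) * hn
  refine ⟨β - ((-1 : ℤ) : ℝ) • β', hΦ.sub_int_smul_mem hβ'Φ hβ hββ', ?_⟩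
  simp only [hβ', Int.cast_neg, Int.cast_one, neg_smul, one_smul, sub_neg_eq_add,
    inner_add_right, inner_sub_right, real_inner_smul_right]
  linarith

theorem inner_self_eq_and_two_inner_eq_or (hΦ : IsCrystallographicRootSet Φ) (hα : α ∈ Φ)
    (hα0 : ∀ β ∈ Φ, ⟪α, β⟫ ≠ 0) (hβ : β ∈ Φ) (hβα : β ∉ ℝ ∙ α) :
    ⟪β, β⟫ = ⟪α, α⟫ ∧ (2 * ⟪α, β⟫ = ⟪α, α⟫ ∨ 2 * ⟪α, β⟫ = -⟪α, α⟫) := by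
  obtain ⟨m, hm⟩ := hΦ.exists_two_inner_eq hα hβ
  obtain ⟨n, hn⟩ := hΦ.exists_two_inner_eq hβ hα
  obtain ⟨hpos, hlt⟩ := int_mul_pos_and_lt_four (hΦ.ne_zero hα) hβα (hα0 β hβ) hm hn
  have hmn2 : m * n ≠ 2 := fun hmn => by
    obtain ⟨γ, hγ, hαγ⟩ := hΦ.exists_inner_eq_zero_of_mul_eq_two hα hβ hm hn hmn
    exact hα0 γ hγ hαγ
  have hmn3 : m * n ≠ 3 := fun hmn => by
    obtain ⟨γ, hγ, hαγ⟩ := hΦ.exists_inner_eq_zero_of_mul_eq_three hα hβ hm hn hmn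
    exact hα0 γ hγ hαγ
  rw [real_inner_comm α β] at hm
  rcases Int.eq_one_or_neg_one_of_mul_eq_one' (by omega : m * n = 1) with ⟨rfl, rfl⟩ | ⟨rfl, rfl⟩
  · push_cast at hm hn
    exact ⟨by linarith, Or.inl (by linarith)⟩
  · push_cast at hm hn
    exact ⟨by linarith, Or.inr (by linarith)⟩

theorem exists_two_inner_eq_inner_self (hΦ : IsCrystallographicRootSet Φ) (hα : α ∈ Φ)
    (hα0 : ∀ β ∈ Φ, ⟪α, β⟫ ≠ 0) {S : Submodule ℝ V} (hαS : α ∈ S)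
    (hS : ∃ β ∈ Φ, β ∉ S) :
    ∃ β ∈ Φ, β ∉ S ∧ ⟪β, β⟫ = ⟪α, α⟫ ∧ 2 * ⟪α, β⟫ = ⟪α, α⟫ := by
  obtain ⟨β, hβ, hβS⟩ := hS
  have hβα : β ∉ ℝ ∙ α := fun h => hβS ((Submodule.span_singleton_le_iff_mem α S).mpr hαS h)
  obtain ⟨hββ, hαβ | hαβ⟩ := hΦ.inner_self_eq_and_two_inner_eq_or hα hα0 hβ hβα
  · exact ⟨β, hβ, hβS, hββ, hαβ⟩
  · refine ⟨-β, hΦ.neg_mem hβ, fun h => hβS (by simpa using S.neg_mem h), ?_, ?_⟩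
    · rwa [inner_neg_neg]
    · rw [inner_neg_right]
      linarith

/-- The reflection `s_γ β` would otherwise be a root off `ℝ α` at `90°` or `0°` to `α`. -/
theorem inner_eq_zero_of_two_inner_eq (hΦ : IsCrystallographicRootSet Φ) (hα : α ∈ Φ)
    (hα0 : ∀ β ∈ Φ, ⟪α, β⟫ ≠ 0) (hβ : β ∈ Φ) (hγ : γ ∈ Φ)
    (hγαβ : γ ∉ Submodule.span ℝ {α, β}) (hββ : ⟪β, β⟫ = ⟪α, α⟫) (hγγ : ⟪γ, γ⟫ = ⟪α, α⟫)
    (hαβ : 2 * ⟪α, β⟫ = ⟪α, α⟫) (hαγ : 2 * ⟪α, γ⟫ = ⟪α, α⟫) : ⟪β, γ⟫ = 0 := by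
  obtain ⟨m, hm⟩ := hΦ.exists_two_inner_eq hγ hβ
  by_contra hβγ
  have hm0 : (m : ℝ) ≠ 0 := by
    rintro hm0
    rw [hm0, zero_mul, mul_eq_zero] at hm
    exact hβγ (hm.resolve_left two_ne_zero)
  have hδα : β - (m : ℝ) • γ ∉ ℝ ∙ α := by
    rintro h
    obtain ⟨c, hc⟩ := Submodule.mem_span_singleton.mp h
    have hmγ : (m : ℝ) • γ = β - c • α := by rw [hc]; abel
    apply hγαβ
    rw [← inv_smul_smul₀ hm0 γ, hmγ]
    exact Submodule.smul_mem _ _ (Submodule.sub_mem _ (Submodule.subset_span (by simp))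
      (Submodule.smul_mem _ _ (Submodule.subset_span (by simp))))
  obtain ⟨-, hδ⟩ := hΦ.inner_self_eq_and_two_inner_eq_or hα hα0
    (hΦ.sub_int_smul_mem hγ hβ hm) hδα
  simp only [inner_sub_right, real_inner_smul_right] at hδ
  have ha := hΦ.inner_self_pos hα
  have hm2 : (m : ℝ) = 2 := by
    rcases hδ with hδ | hδ
    · refine absurd (mul_right_cancel₀ ha.ne' ?_) hm0
      linear_combination (-(m : ℝ)) * hαγ + hαβ - hδ
    · refine mul_right_cancel₀ ha.ne' ?_
      linear_combination (-(m : ℝ)) * hαγ + hαβ - hδ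
  have hγβ : γ ∉ ℝ ∙ β := fun h => hγαβ (Submodule.span_mono (by simp) h)
  have hcs := real_inner_mul_inner_self_lt (hΦ.ne_zero hβ) hγβ
  rw [hm2, hγγ] at hm
  rw [hββ, hγγ, show ⟪β, γ⟫ = ⟪α, α⟫ by linarith] at hcs
  exact lt_irrefl _ hcs

end IsCrystallographicRootSet

end

theorem exists_orthogonal_root_general
    (V : Type*) [NormedAddCommGroup V] [InnerProductSpace ℝ V]
    (Φ : Set V) (h0 : (0 : V) ∉ Φ)
    (hrefl : ∀ α ∈ Φ, ∀ β ∈ Φ, β - (2 * ⟪β, α⟫ / ⟪α, α⟫) • α ∈ Φ)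
    (hcrys : ∀ α ∈ Φ, ∀ β ∈ Φ, ∃ n : ℤ, 2 * ⟪β, α⟫ / ⟪α, α⟫ = (n : ℝ))
    (hrank : 3 ≤ Module.finrank ℝ ↥(Submodule.span ℝ Φ)) :
    ∀ α ∈ Φ, ∃ β ∈ Φ, ⟪α, β⟫ = 0 := by
  classical
  intro α hα
  by_contra! hα0
  have hΦ : IsCrystallographicRootSet Φ := ⟨h0, hrefl, hcrys⟩
  have hβ₀ := exists_mem_notMem_span_of_card_lt_finrank (K := ℝ) {α}
    ((by simp : ({α} : Finset V).card < 3).trans_le hrank)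
  obtain ⟨β, hβ, -, hββ, hαβ⟩ := hΦ.exists_two_inner_eq_inner_self hα hα0
    (Submodule.mem_span_singleton_self α) (by simpa using hβ₀)
  have hγ₀ := exists_mem_notMem_span_of_card_lt_finrank (K := ℝ) {α, β}
    ((Finset.card_le_two.trans_lt (by norm_num)).trans_le hrank)
  obtain ⟨γ, hγ, hγαβ, hγγ, hαγ⟩ := hΦ.exists_two_inner_eq_inner_self hα hα0
    (Submodule.subset_span (by simp) : α ∈ Submodule.span ℝ {α, β}) (by simpa using hγ₀)
  have hγ' : α - γ ∈ Φ := by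
    simpa using hΦ.sub_int_smul_mem hγ hα (n := 1) (by rw [hγγ]; push_cast; linarith)
  have hγ'αβ : α - γ ∉ Submodule.span ℝ {α, β} := fun h =>
    hγαβ (by simpa using Submodule.sub_mem _ (Submodule.subset_span (Set.mem_insert α {β})) h)
  have hβγ := hΦ.inner_eq_zero_of_two_inner_eq hα hα0 hβ hγ hγαβ hββ hγγ hαβ hαγ
  have hβγ' := hΦ.inner_eq_zero_of_two_inner_eq hα hα0 hβ hγ' hγ'αβ hββ
    (by simp only [inner_sub_left, inner_sub_right, real_inner_comm α γ]; linarith)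
    hαβ (by rw [inner_sub_right]; linarith)
  apply hα0 β hβ
  rw [real_inner_comm, ← sub_add_cancel α γ, inner_add_right, hβγ, hβγ', add_zero]

/-- Claim used in the first case of the proof of Proposition 4.3: in a (possibly
non-reduced) crystallographic root system `Φ` whose span has dimension at least `3`,
every root `α ∈ Φ` admits a root `β ∈ Φ` orthogonal to it. -/
theorem exists_orthogonal_root
    (V : Type*) [NormedAddCommGroup V] [InnerProductSpace ℝ V]
    (Φ : Set V) (hfin : Φ.Finite) (h0 : (0 : V) ∉ Φ)
    (hrefl : ∀ α ∈ Φ, ∀ β ∈ Φ, β - (2 * ⟪β, α⟫ / ⟪α, α⟫) • α ∈ Φ)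
    (hcrys : ∀ α ∈ Φ, ∀ β ∈ Φ, ∃ n : ℤ, 2 * ⟪β, α⟫ / ⟪α, α⟫ = (n : ℝ))
    (hrank : 3 ≤ Module.finrank ℝ ↥(Submodule.span ℝ Φ)) :
    ∀ α ∈ Φ, ∃ β ∈ Φ, ⟪α, β⟫ = 0 :=
  exists_orthogonal_root_general V Φ h0 hrefl hcrys hrank
end
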